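/- If ψ₀(φ, θ) is a stationary solution of the non-rotating vorticity equation, i.e., J(ψ₀, Δψ₀) = 0, then ψ_ω(φ, θ, t) = ψ₀(φ + ωt, θ) + ω·sin θ solves the rotating vorticity equation ∂_t(Δψ) + J(ψ, Δψ + 2ω sin θ) = 0, where J(f,g) = (1/cos θ)(∂_φf·∂_θg - ∂_θf·∂_φg) and Δ is the spherical Laplacian. -/

import Mathlib

/-- Partial derivative in the longitude variable `φ` (first coordinate). -/
noncomputable def pphi (f : ℝ × ℝ → ℝ) : ℝ × ℝ → ℝ :=
  fun p => deriv (fun φ => f (φ, p.2)) p.1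

/-- Partial derivative in the latitude variable `θ` (second coordinate). -/
noncomputable def ptheta (f : ℝ × ℝ → ℝ) : ℝ × ℝ → ℝ :=
  fun p => deriv (fun θ => f (p.1, θ)) p.2

/-- The spherical Jacobian `J(f,g) = (1/cos θ)(∂_φ f ∂_θ g − ∂_θ f ∂_φ g)`. -/
noncomputable def sphJ (f g : ℝ × ℝ → ℝ) : ℝ × ℝ → ℝ :=
  fun p => (1 / Real.cos p.2) * (pphi f p * ptheta g p - ptheta f p * pphi g p)

/-- The spherical Laplace–Beltrami operator in `(φ, θ)` coordinates. -/
noncomputable def sphLap (f : ℝ × ℝ → ℝ) : ℝ × ℝ → ℝ :=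
  fun p => (1 / Real.cos p.2) * ptheta (fun q => Real.cos q.2 * ptheta f q) p +
    (1 / (Real.cos p.2) ^ 2) * pphi (pphi f) p

section Aux

variable {f g : ℝ × ℝ → ℝ}

lemma hasDerivAt_phi (hf : ContDiff ℝ (⊤ : ℕ∞) f) (x y : ℝ) :
    HasDerivAt (fun φ => f (φ, y)) (fderiv ℝ f (x, y) (1, 0)) x := by
  have h1 : HasDerivAt (fun φ : ℝ => (φ, y)) ((1:ℝ), (0:ℝ)) x :=
    (hasDerivAt_id x).prodMk (hasDerivAt_const x y)
  have h2 : HasFDerivAt f (fderiv ℝ f (x, y)) ((fun φ : ℝ => (φ, y)) x) :=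
    (hf.differentiable (by simp) (x, y)).hasFDerivAt
  exact h2.comp_hasDerivAt x h1

lemma hasDerivAt_theta (hf : ContDiff ℝ (⊤ : ℕ∞) f) (x y : ℝ) :
    HasDerivAt (fun θ => f (x, θ)) (fderiv ℝ f (x, y) (0, 1)) y := by
  have h1 : HasDerivAt (fun θ : ℝ => (x, θ)) ((0:ℝ), (1:ℝ)) y :=
    (hasDerivAt_const y x).prodMk (hasDerivAt_id y)
  have h2 : HasFDerivAt f (fderiv ℝ f (x, y)) ((fun θ : ℝ => (x, θ)) y) :=
    (hf.differentiable (by simp) (x, y)).hasFDerivAt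
  exact h2.comp_hasDerivAt y h1

lemma pphi_apply (hf : ContDiff ℝ (⊤ : ℕ∞) f) (p : ℝ × ℝ) :
    pphi f p = fderiv ℝ f p (1, 0) := (hasDerivAt_phi hf p.1 p.2).deriv

lemma ptheta_apply (hf : ContDiff ℝ (⊤ : ℕ∞) f) (p : ℝ × ℝ) :
    ptheta f p = fderiv ℝ f p (0, 1) := (hasDerivAt_theta hf p.1 p.2).deriv

lemma contDiff_pphi (hf : ContDiff ℝ (⊤ : ℕ∞) f) : ContDiff ℝ (⊤ : ℕ∞) (pphi f) := by
  have : pphi f = fun p => fderiv ℝ f p (1, 0) := funext fun p => pphi_apply hf p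
  rw [this]
  exact (hf.fderiv_right (m := (⊤ : ℕ∞)) (by simp)).clm_apply contDiff_const

lemma contDiff_ptheta (hf : ContDiff ℝ (⊤ : ℕ∞) f) : ContDiff ℝ (⊤ : ℕ∞) (ptheta f) := by
  have : ptheta f = fun p => fderiv ℝ f p (0, 1) := funext fun p => ptheta_apply hf p
  rw [this]
  exact (hf.fderiv_right (m := (⊤ : ℕ∞)) (by simp)).clm_apply contDiff_const

lemma pphi_add (hf : ContDiff ℝ (⊤ : ℕ∞) f) (hg : ContDiff ℝ (⊤ : ℕ∞) g) (p : ℝ × ℝ) :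
    pphi (fun q => f q + g q) p = pphi f p + pphi g p := by
  rw [pphi_apply hf p, pphi_apply hg p]
  exact ((hasDerivAt_phi hf p.1 p.2).add (hasDerivAt_phi hg p.1 p.2)).deriv

lemma ptheta_add (hf : ContDiff ℝ (⊤ : ℕ∞) f) (hg : ContDiff ℝ (⊤ : ℕ∞) g) (p : ℝ × ℝ) :
    ptheta (fun q => f q + g q) p = ptheta f p + ptheta g p := by
  rw [ptheta_apply hf p, ptheta_apply hg p]
  exact ((hasDerivAt_theta hf p.1 p.2).add (hasDerivAt_theta hg p.1 p.2)).deriv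

lemma pphi_shift (f : ℝ × ℝ → ℝ) (a : ℝ) (p : ℝ × ℝ) :
    pphi (fun q => f (q.1 + a, q.2)) p = pphi f (p.1 + a, p.2) :=
  deriv_comp_add_const (fun φ => f (φ, p.2)) a p.1

lemma ptheta_shift (f : ℝ × ℝ → ℝ) (a : ℝ) (p : ℝ × ℝ) :
    ptheta (fun q => f (q.1 + a, q.2)) p = ptheta f (p.1 + a, p.2) := rfl

lemma sphLap_shift (f : ℝ × ℝ → ℝ) (a : ℝ) (p : ℝ × ℝ) :
    sphLap (fun q => f (q.1 + a, q.2)) p = sphLap f (p.1 + a, p.2) := by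
  have h1 : (fun q : ℝ × ℝ => Real.cos q.2 * ptheta (fun r => f (r.1 + a, r.2)) q)
      = fun q => (fun r : ℝ × ℝ => Real.cos r.2 * ptheta f r) (q.1 + a, q.2) := by
    funext q
    simp only
    rw [ptheta_shift f a q]
  have h2 : pphi (fun q : ℝ × ℝ => f (q.1 + a, q.2)) = fun q => pphi f (q.1 + a, q.2) :=
    funext fun q => pphi_shift f a q
  show (1 / Real.cos p.2) * ptheta (fun q => Real.cos q.2 * ptheta (fun r => f (r.1 + a, r.2)) q) p
      + (1 / (Real.cos p.2) ^ 2) * pphi (pphi (fun r => f (r.1 + a, r.2))) p = _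
  rw [h1, h2, ptheta_shift (fun r : ℝ × ℝ => Real.cos r.2 * ptheta f r) a p,
    pphi_shift (pphi f) a p]
  rfl

lemma sphLap_add (hf : ContDiff ℝ (⊤ : ℕ∞) f) (hg : ContDiff ℝ (⊤ : ℕ∞) g) (p : ℝ × ℝ) :
    sphLap (fun q => f q + g q) p = sphLap f p + sphLap g p := by
  have hF : ContDiff ℝ (⊤ : ℕ∞) (fun q : ℝ × ℝ => Real.cos q.2 * ptheta f q) :=
    (Real.contDiff_cos.comp contDiff_snd).mul (contDiff_ptheta hf)
  have hG : ContDiff ℝ (⊤ : ℕ∞) (fun q : ℝ × ℝ => Real.cos q.2 * ptheta g q) :=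
    (Real.contDiff_cos.comp contDiff_snd).mul (contDiff_ptheta hg)
  have h1 : (fun q : ℝ × ℝ => Real.cos q.2 * ptheta (fun r => f r + g r) q)
      = fun q => Real.cos q.2 * ptheta f q + Real.cos q.2 * ptheta g q := by
    funext q
    rw [ptheta_add hf hg q]
    ring
  have h2 : pphi (fun q : ℝ × ℝ => f q + g q) = fun q => pphi f q + pphi g q :=
    funext fun q => pphi_add hf hg q
  show (1 / Real.cos p.2) * ptheta (fun q => Real.cos q.2 * ptheta (fun r => f r + g r) q) p
      + (1 / (Real.cos p.2) ^ 2) * pphi (pphi (fun r => f r + g r)) p = _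
  rw [h1, h2, ptheta_add hF hG p, pphi_add (contDiff_pphi hf) (contDiff_pphi hg) p]
  show _ = (1 / Real.cos p.2) * ptheta (fun q => Real.cos q.2 * ptheta f q) p
      + (1 / (Real.cos p.2) ^ 2) * pphi (pphi f) p
      + ((1 / Real.cos p.2) * ptheta (fun q => Real.cos q.2 * ptheta g q) p
      + (1 / (Real.cos p.2) ^ 2) * pphi (pphi g) p)
  ring

lemma sphLap_omega_sin (ω x y : ℝ) :
    sphLap (fun q : ℝ × ℝ => ω * Real.sin q.2) (x, y)
      = (1 / Real.cos y) * (-(2 * ω * Real.sin y * Real.cos y)) := by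
  have hpt : ptheta (fun q : ℝ × ℝ => ω * Real.sin q.2) = fun q => ω * Real.cos q.2 := by
    funext q
    show deriv (fun θ => ω * Real.sin θ) q.2 = ω * Real.cos q.2
    exact ((Real.hasDerivAt_sin q.2).const_mul ω).deriv
  have hpp2 : pphi (pphi (fun q : ℝ × ℝ => ω * Real.sin q.2)) (x, y) = 0 := by
    have hpp : pphi (fun q : ℝ × ℝ => ω * Real.sin q.2) = fun _ => 0 := by
      funext q
      show deriv (fun _ : ℝ => ω * Real.sin q.2) q.1 = 0
      exact deriv_const _ _
    rw [hpp]
    show deriv (fun _ : ℝ => (0:ℝ)) x = 0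
    exact deriv_const _ _
  have hmain : ptheta (fun q : ℝ × ℝ => Real.cos q.2 * (ω * Real.cos q.2)) (x, y)
      = -(2 * ω * Real.sin y * Real.cos y) := by
    show deriv (fun θ => Real.cos θ * (ω * Real.cos θ)) y = _
    rw [HasDerivAt.deriv (f := fun θ => Real.cos θ * (ω * Real.cos θ))
      ((Real.hasDerivAt_cos y).mul ((Real.hasDerivAt_cos y).const_mul ω))]
    ring
  show (1 / Real.cos y) * ptheta (fun q => Real.cos q.2 * ptheta (fun r : ℝ × ℝ => ω * Real.sin r.2) q) (x, y)
      + (1 / (Real.cos y) ^ 2) * pphi (pphi (fun q : ℝ × ℝ => ω * Real.sin q.2)) (x, y) = _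
  rw [hpt, hpp2, hmain]
  ring

end Aux

theorem stationary_to_travelling_wave (ω : ℝ) (ψ₀ : ℝ × ℝ → ℝ)
    (hsmooth : ContDiff ℝ (⊤ : ℕ∞) ψ₀)
    (hstat : ∀ p : ℝ × ℝ, sphJ ψ₀ (sphLap ψ₀) p = 0) :
    ∀ (t : ℝ) (p : ℝ × ℝ),
      deriv (fun s : ℝ =>
          sphLap (fun q => ψ₀ (q.1 + ω * s, q.2) + ω * Real.sin q.2) p) t +
        sphJ (fun q => ψ₀ (q.1 + ω * t, q.2) + ω * Real.sin q.2)
          (fun q => sphLap (fun r => ψ₀ (r.1 + ω * t, r.2) + ω * Real.sin r.2) q +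
            2 * ω * Real.sin q.2) p = 0 := by
  intro t p
  by_cases hcos : Real.cos p.2 = 0
  · -- degenerate case: all terms vanish since `1/cos p.2 = 0`
    have h1 : (fun s : ℝ => sphLap (fun q => ψ₀ (q.1 + ω * s, q.2) + ω * Real.sin q.2) p)
        = fun _ => 0 := by
      funext s
      simp [sphLap, hcos]
    rw [h1, deriv_const]
    simp [sphJ, hcos]
  · have hψs : ∀ a : ℝ, ContDiff ℝ (⊤ : ℕ∞) (fun q : ℝ × ℝ => ψ₀ (q.1 + a, q.2)) := fun a =>
      hsmooth.comp ((contDiff_fst.add contDiff_const).prodMk contDiff_snd)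
    have hsin : ContDiff ℝ (⊤ : ℕ∞) (fun q : ℝ × ℝ => ω * Real.sin q.2) :=
      contDiff_const.mul (Real.contDiff_sin.comp contDiff_snd)
    have key : ∀ (s : ℝ) (q : ℝ × ℝ),
        sphLap (fun r => ψ₀ (r.1 + ω * s, r.2) + ω * Real.sin r.2) q
          = sphLap ψ₀ (q.1 + ω * s, q.2) + sphLap (fun r : ℝ × ℝ => ω * Real.sin r.2) q := by
      intro s q
      rw [sphLap_add (hψs (ω * s)) hsin q, sphLap_shift ψ₀ (ω * s) q]
    -- differentiability of sphLap ψ₀ along horizontal lines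
    have hgdiff : ∀ x : ℝ, DifferentiableAt ℝ (fun x : ℝ => sphLap ψ₀ (x, p.2)) x := by
      intro x
      have hu : ContDiff ℝ (⊤ : ℕ∞) (ptheta (fun q : ℝ × ℝ => Real.cos q.2 * ptheta ψ₀ q)) :=
        contDiff_ptheta ((Real.contDiff_cos.comp contDiff_snd).mul (contDiff_ptheta hsmooth))
      have hv : ContDiff ℝ (⊤ : ℕ∞) (pphi (pphi ψ₀)) := contDiff_pphi (contDiff_pphi hsmooth)
      have heq : (fun x : ℝ => sphLap ψ₀ (x, p.2)) = fun x =>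
          (1 / Real.cos p.2) * ptheta (fun q => Real.cos q.2 * ptheta ψ₀ q) (x, p.2)
          + (1 / (Real.cos p.2) ^ 2) * pphi (pphi ψ₀) (x, p.2) := rfl
      rw [heq]
      have hu' : DifferentiableAt ℝ
          (fun x : ℝ => ptheta (fun q : ℝ × ℝ => Real.cos q.2 * ptheta ψ₀ q) (x, p.2)) x :=
        ((hu.comp (contDiff_id.prodMk contDiff_const)).differentiable (by simp) x)
      have hv' : DifferentiableAt ℝ (fun x : ℝ => pphi (pphi ψ₀) (x, p.2)) x :=
        ((hv.comp (contDiff_id.prodMk contDiff_const)).differentiable (by simp) x)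
      exact (hu'.const_mul _).add (hv'.const_mul _)
    -- the time-derivative term
    have hderiv : deriv (fun s : ℝ =>
        sphLap (fun q => ψ₀ (q.1 + ω * s, q.2) + ω * Real.sin q.2) p) t
        = ω * pphi (sphLap ψ₀) (p.1 + ω * t, p.2) := by
      have h1 : (fun s : ℝ => sphLap (fun q => ψ₀ (q.1 + ω * s, q.2) + ω * Real.sin q.2) p)
          = fun s => sphLap ψ₀ (p.1 + ω * s, p.2) + sphLap (fun r : ℝ × ℝ => ω * Real.sin r.2) p := by
        funext s
        exact key s p
      rw [h1, deriv_add_const]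
      have hline : HasDerivAt (fun s : ℝ => p.1 + ω * s) ω t := by
        simpa using ((hasDerivAt_id t).const_mul ω).const_add p.1
      have h2 : HasDerivAt (fun s : ℝ => sphLap ψ₀ (p.1 + ω * s, p.2))
          (deriv (fun x : ℝ => sphLap ψ₀ (x, p.2)) (p.1 + ω * t) * ω) t :=
        by have := HasDerivAt.comp t (hgdiff (p.1 + ω * t)).hasDerivAt hline; exact this
      rw [h2.deriv]
      have : pphi (sphLap ψ₀) (p.1 + ω * t, p.2)
          = deriv (fun x : ℝ => sphLap ψ₀ (x, p.2)) (p.1 + ω * t) := rfl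
      rw [this]
      ring
    -- the Jacobian term
    have hczero : ∀ x y : ℝ, Real.cos y ≠ 0 →
        sphLap (fun r : ℝ × ℝ => ω * Real.sin r.2) (x, y) + 2 * ω * Real.sin y = 0 := by
      intro x y hy
      rw [sphLap_omega_sin ω x y]
      field_simp
      ring
    have hgfun : (fun q : ℝ × ℝ =>
        sphLap (fun r => ψ₀ (r.1 + ω * t, r.2) + ω * Real.sin r.2) q + 2 * ω * Real.sin q.2)
        = fun q => sphLap ψ₀ (q.1 + ω * t, q.2)
          + (sphLap (fun r : ℝ × ℝ => ω * Real.sin r.2) q + 2 * ω * Real.sin q.2) := by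
      funext q
      rw [key t q]
      ring
    have hA : pphi (fun q : ℝ × ℝ => ψ₀ (q.1 + ω * t, q.2) + ω * Real.sin q.2) p
        = pphi ψ₀ (p.1 + ω * t, p.2) := by
      show deriv (fun φ : ℝ => ψ₀ (φ + ω * t, p.2) + ω * Real.sin p.2) p.1 = _
      rw [deriv_add_const]
      exact deriv_comp_add_const (fun φ => ψ₀ (φ, p.2)) (ω * t) p.1
    have hB : ptheta (fun q : ℝ × ℝ => ψ₀ (q.1 + ω * t, q.2) + ω * Real.sin q.2) p
        = ptheta ψ₀ (p.1 + ω * t, p.2) + ω * Real.cos p.2 := by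
      have h1 := hasDerivAt_theta hsmooth (p.1 + ω * t) p.2
      have h12 := h1.add ((Real.hasDerivAt_sin p.2).const_mul ω)
      have e : ptheta (fun q : ℝ × ℝ => ψ₀ (q.1 + ω * t, q.2) + ω * Real.sin q.2) p
          = fderiv ℝ ψ₀ (p.1 + ω * t, p.2) (0, 1) + ω * Real.cos p.2 := h12.deriv
      rw [e, ptheta_apply hsmooth (p.1 + ω * t, p.2)]
    have hC : pphi (fun q : ℝ × ℝ => sphLap ψ₀ (q.1 + ω * t, q.2)
        + (sphLap (fun r : ℝ × ℝ => ω * Real.sin r.2) q + 2 * ω * Real.sin q.2)) p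
        = pphi (sphLap ψ₀) (p.1 + ω * t, p.2) := by
      have heq : (fun φ : ℝ => sphLap ψ₀ (φ + ω * t, p.2)
          + (sphLap (fun r : ℝ × ℝ => ω * Real.sin r.2) (φ, p.2) + 2 * ω * Real.sin p.2))
          = fun φ => sphLap ψ₀ (φ + ω * t, p.2) := by
        funext φ
        rw [hczero φ p.2 hcos, add_zero]
      show deriv (fun φ : ℝ => sphLap ψ₀ (φ + ω * t, p.2)
          + (sphLap (fun r : ℝ × ℝ => ω * Real.sin r.2) (φ, p.2) + 2 * ω * Real.sin p.2)) p.1 = _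
      rw [heq]
      exact deriv_comp_add_const (fun φ => sphLap ψ₀ (φ, p.2)) (ω * t) p.1
    have hT : ptheta (fun q : ℝ × ℝ => sphLap ψ₀ (q.1 + ω * t, q.2)
        + (sphLap (fun r : ℝ × ℝ => ω * Real.sin r.2) q + 2 * ω * Real.sin q.2)) p
        = ptheta (sphLap ψ₀) (p.1 + ω * t, p.2) := by
      show deriv (fun θ : ℝ => sphLap ψ₀ (p.1 + ω * t, θ)
          + (sphLap (fun r : ℝ × ℝ => ω * Real.sin r.2) (p.1, θ) + 2 * ω * Real.sin θ)) p.2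
          = deriv (fun θ : ℝ => sphLap ψ₀ (p.1 + ω * t, θ)) p.2
      apply Filter.EventuallyEq.deriv_eq
      have hev : ∀ᶠ θ in nhds p.2, Real.cos θ ≠ 0 :=
        Real.continuous_cos.continuousAt.eventually_ne hcos
      filter_upwards [hev] with θ hθ
      rw [hczero p.1 θ hθ, add_zero]
    have hst : (1 / Real.cos p.2) * (pphi ψ₀ (p.1 + ω * t, p.2) * ptheta (sphLap ψ₀) (p.1 + ω * t, p.2)
        - ptheta ψ₀ (p.1 + ω * t, p.2) * pphi (sphLap ψ₀) (p.1 + ω * t, p.2)) = 0 :=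
      hstat (p.1 + ω * t, p.2)
    have hinner : pphi ψ₀ (p.1 + ω * t, p.2) * ptheta (sphLap ψ₀) (p.1 + ω * t, p.2)
        - ptheta ψ₀ (p.1 + ω * t, p.2) * pphi (sphLap ψ₀) (p.1 + ω * t, p.2) = 0 := by
      rcases mul_eq_zero.mp hst with h | h
      · exact absurd h (one_div_ne_zero hcos)
      · exact h
    have hJ : sphJ (fun q => ψ₀ (q.1 + ω * t, q.2) + ω * Real.sin q.2)
        (fun q => sphLap (fun r => ψ₀ (r.1 + ω * t, r.2) + ω * Real.sin r.2) q +
          2 * ω * Real.sin q.2) p = -(ω * pphi (sphLap ψ₀) (p.1 + ω * t, p.2)) := by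
      rw [hgfun]
      simp only [sphJ]
      rw [hA, hB, hC, hT]
      have hexp : pphi ψ₀ (p.1 + ω * t, p.2) * ptheta (sphLap ψ₀) (p.1 + ω * t, p.2)
          - (ptheta ψ₀ (p.1 + ω * t, p.2) + ω * Real.cos p.2) * pphi (sphLap ψ₀) (p.1 + ω * t, p.2)
          = -(ω * Real.cos p.2 * pphi (sphLap ψ₀) (p.1 + ω * t, p.2)) := by
        linear_combination hinner
      rw [hexp]
      field_simp
    rw [hderiv, hJ]
    ring
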